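/- arXiv:2511.04878 — 2 statements merged into one kernel-verified Lean document; each statement's English description precedes it below -/
import Mathlib

section
/- Let n ≥ 1 and for all integers p, q ≥ 0 let p̃_pq ∈ H̃^{pq}. Suppose that the series Σ_{p,q≥0} S_pq(|z|²) p̃_pq(z,z̄) converges uniformly on compact subsets of B_n. Then for every t ∈ ℂ, the series Σ_{p,q≥0} [4pq+(2n-2)(p+q)+1]^t S_pq(|z|²) p̃_pq(z,z̄) converges absolutely and uniformly on compact subsets of B_n. -/
open MeasureTheory ENNReal NNReal

/-- Pochhammer symbol `(a)_k = Γ(a+k)/Γ(a)`. -/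
noncomputable def poch (a : ℝ) (k : ℕ) : ℝ := Real.Gamma (a + k) / Real.Gamma a

/-- Gauss hypergeometric function `₂F₁(a,b;c;t)`, as a sum of its series. -/
noncomputable def hyp2F1 (a b c t : ℝ) : ℝ :=
  ∑' k : ℕ, (poch a k * poch b k) / (poch c k * (Nat.factorial k)) * t ^ k

/-- `S_pq(t)`. -/
noncomputable def Spq (n p q : ℕ) (t : ℝ) : ℝ :=
  (Real.Gamma (n + p) * Real.Gamma (n + q)) / (Real.Gamma n * Real.Gamma ((n : ℝ) + p + q)) *
    hyp2F1 p q ((p : ℝ) + q + n) t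

/-- `c_pq(s)`. -/
noncomputable def cpq (n p q : ℕ) (s : ℝ) : ℝ :=
  poch (s + 1) n / Real.Gamma n *
    ∫ t in Set.Ioo (0:ℝ) 1, t ^ ((p : ℝ) + q + n - 1) * (1 - t) ^ s * (Spq n p q t) ^ 2
noncomputable instance (n : ℕ) : MeasurableSpace (EuclideanSpace ℂ (Fin n)) := borel _
instance (n : ℕ) : BorelSpace (EuclideanSpace ℂ (Fin n)) := ⟨rfl⟩
/-- Lebesgue measure on `ℂⁿ`. -/
noncomputable instance (n : ℕ) : MeasureSpace (EuclideanSpace ℂ (Fin n)) :=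
  ⟨Measure.map (⇑(PiLp.continuousLinearEquiv 2 ℝ (fun _ : Fin n => ℂ)).symm) volume⟩

abbrev En (n : ℕ) := EuclideanSpace ℂ (Fin n)

/-- Wirtinger derivative `∂f/∂z_j`. -/
noncomputable def wd (n : ℕ) (j : Fin n) (f : En n → ℂ) (z : En n) : ℂ :=
  (1/2 : ℂ) * (fderiv ℝ f z (EuclideanSpace.single j 1) -
    Complex.I * fderiv ℝ f z (EuclideanSpace.single j Complex.I))

/-- Wirtinger derivative `∂f/∂z̄_j`. -/
noncomputable def wdb (n : ℕ) (j : Fin n) (f : En n → ℂ) (z : En n) : ℂ :=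
  (1/2 : ℂ) * (fderiv ℝ f z (EuclideanSpace.single j 1) +
    Complex.I * fderiv ℝ f z (EuclideanSpace.single j Complex.I))

/-- The complex-tangential field `L_{jk} = z̄_j ∂/∂z_k − z̄_k ∂/∂z_j`. -/
noncomputable def Lop (n : ℕ) (j k : Fin n) (f : En n → ℂ) : En n → ℂ :=
  fun z => (starRingEnd ℂ) (z j) * wd n k f z - (starRingEnd ℂ) (z k) * wd n j f z

/-- The complex-tangential field `L̄_{jk} = z_j ∂/∂z̄_k − z_k ∂/∂z̄_j`. -/
noncomputable def Lbarop (n : ℕ) (j k : Fin n) (f : En n → ℂ) : En n → ℂ :=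
  fun z => z j * wdb n k f z - z k * wdb n j f z

/-- `□ = −Σ_{j,k} (L_{jk}L̄_{jk} + L̄_{jk}L_{jk})`. -/
noncomputable def BoxOp (n : ℕ) (f : En n → ℂ) : En n → ℂ :=
  fun z => -∑ j : Fin n, ∑ k : Fin n, (Lop n j k (Lbarop n j k f) z + Lbarop n j k (Lop n j k f) z)

/-- `f` is `M`-harmonic on the unit ball (of smoothness class `m`):
`Δ̃f = 4(1-|z|²) Σ_{j,k}(δ_{jk} - z_j z̄_k) ∂²f/∂z_j∂z̄_k = 0` on the ball. -/
def MHarm (n : ℕ) (m : ℕ∞) (f : En n → ℂ) : Prop :=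
  ContDiffOn ℝ m f (Metric.ball 0 1) ∧
  ∀ z ∈ Metric.ball (0 : En n) 1,
    (4 : ℂ) * (1 - (‖z‖ : ℂ) ^ 2) *
      ∑ j : Fin n, ∑ k : Fin n,
        ((if j = k then 1 else 0) - z j * (starRingEnd ℂ) (z k)) * wd n j (wdb n k f) z = 0

/-- `‖f‖²_s = ∫_{B_n} |f|² dμ_s` as an extended real. -/
noncomputable def nsqE (n : ℕ) (s : ℝ) (f : En n → ℂ) : ℝ≥0∞ :=
  ∫⁻ z in Metric.ball (0 : En n) 1,
    ENNReal.ofReal (poch (s + 1) n / Real.pi ^ n * (1 - ‖z‖ ^ 2) ^ s * ‖f z‖ ^ 2)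

/-- `‖f‖²_s = ∫_{B_n} |f|² dμ_s` as a real number. -/
noncomputable def normSqS (n : ℕ) (s : ℝ) (f : En n → ℂ) : ℝ :=
  ∫ z in Metric.ball (0 : En n) 1,
    poch (s + 1) n / Real.pi ^ n * (1 - ‖z‖ ^ 2) ^ s * ‖f z‖ ^ 2

/-- The normalized surface measure `σ` on the unit sphere `∂B_n`. -/
noncomputable def sphMeas (n : ℕ) : Measure (Metric.sphere (0 : En n) 1) :=
  ((volume : Measure (En n)).toSphere Set.univ)⁻¹ • (volume : Measure (En n)).toSphere

/-- `‖g‖²_{∂B_n} = ∫_{∂B_n} |g|² dσ`. -/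
noncomputable def normSqSphere (n : ℕ) (g : En n → ℂ) : ℝ :=
  ∫ ζ : Metric.sphere (0 : En n) 1, ‖g (ζ : En n)‖ ^ 2 ∂ sphMeas n

/-- Membership in `H̃^{pq}`: `P` is a polynomial in `z, z̄`, homogeneous of bidegree `(p,q)`,
and harmonic for the Euclidean Laplacian `Δ = 4 Σ_j ∂²/∂z_j∂z̄_j` on `ℝ^{2n}`. -/
def InHtilde (n : ℕ) (p q : ℕ) (P : En n → ℂ) : Prop :=
  (∃ Q : MvPolynomial (Fin n ⊕ Fin n) ℂ,
    (∀ z : En n,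
      P z = MvPolynomial.eval (Sum.elim (fun j => z j) (fun j => (starRingEnd ℂ) (z j))) Q) ∧
    ∀ d ∈ Q.support,
      (∑ j : Fin n, d (Sum.inl j)) = p ∧ (∑ j : Fin n, d (Sum.inr j)) = q) ∧
  ∀ z : En n, ∑ j : Fin n, wd n j (wdb n j P) z = 0

/-!
Uniform convergence of `Σ S_pq(|z|²) p̃_pq` on a closed ball of radius `R < 1` makes its terms
uniformly bounded there, by `C` say. Each `p̃_pq` is homogeneous of degree `p + q`, and `S_pq` is
nonnegative and increasing on `[0, 1)` because its hypergeometric series has nonnegative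
coefficients; rescaling `z` to the sphere of radius `R` therefore bounds the `(p, q)` term by
`(r / R) ^ (p + q) * C` on the ball of radius `r < R`. The multiplier
`4pq + (2n - 2)(p + q) + 1` grows only polynomially in `p` and `q`, so the Weierstrass M-test
applies with a polynomial-times-geometric majorant.
-/

open Filter Set

lemma poch_eq_ascPochhammer_eval {a : ℝ} (ha : 0 < a) (k : ℕ) :
    poch a k = (ascPochhammer ℝ k).eval a := by
  induction k with
  | zero => simp [poch, (Real.Gamma_pos_of_pos ha).ne']
  | succ k ih =>
    rw [ascPochhammer_succ_eval, ← ih, poch, poch, Nat.cast_succ, ← add_assoc,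
      Real.Gamma_add_one (by positivity)]
    ring

lemma hyp2F1_nonneg {a b c t : ℝ} (ha : 0 ≤ a) (hb : 0 ≤ b) (hc : 0 ≤ c) (ht : 0 ≤ t) :
    0 ≤ hyp2F1 a b c t :=
  tsum_nonneg fun k => by simp only [poch]; positivity

-- Since `Γ 0 = 0`, `poch 0 k = 0` for every `k`, including `k = 0`.
lemma hyp2F1_eq_zero_of_eq_zero {a b c : ℝ} (h : a = 0 ∨ b = 0 ∨ c = 0) : hyp2F1 a b c = 0 := by
  ext t
  rcases h with rfl | rfl | rfl <;> simp [hyp2F1, poch]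

lemma hyp2F1_eq_ordinaryHypergeometric {a b c : ℝ} (ha : 0 < a) (hb : 0 < b) (hc : 0 < c) :
    hyp2F1 a b c = ₂F₁ a b c := by
  ext t
  rw [hyp2F1, ordinaryHypergeometric, ordinaryHypergeometric_sum_eq]
  refine tsum_congr fun k => ?_
  simp only [poch_eq_ascPochhammer_eval ha, poch_eq_ascPochhammer_eval hb,
    poch_eq_ascPochhammer_eval hc, smul_eq_mul]
  field_simp

lemma ordinaryHypergeometricCoefficient_pos {a b c : ℝ} (ha : 0 < a) (hb : 0 < b) (hc : 0 < c)
    (k : ℕ) : 0 < ordinaryHypergeometricCoefficient a b c k := by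
  have := ascPochhammer_pos k a ha
  have := ascPochhammer_pos k b hb
  have := ascPochhammer_pos k c hc
  positivity

lemma summable_ordinaryHypergeometricCoefficient_mul_pow {a b c t : ℝ} (ha : 0 < a) (hb : 0 < b)
    (hc : 0 < c) (ht : |t| < 1) :
    Summable fun k => ordinaryHypergeometricCoefficient a b c k * t ^ k := by
  have hrad : (ordinaryHypergeometricSeries ℝ a b c).radius = 1 :=
    ordinaryHypergeometricSeries_radius_eq_one ℝ a b c fun k =>
      ⟨by linarith [k.cast_nonneg (α := ℝ)], by linarith [k.cast_nonneg (α := ℝ)],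
        by linarith [k.cast_nonneg (α := ℝ)]⟩
  have h := (ordinaryHypergeometricSeries ℝ a b c).summable_norm_apply (x := t)
    (by simpa [hrad, Metric.mem_eball, edist_dist] using ht)
  simp only [ordinaryHypergeometricSeries_apply_eq, smul_eq_mul] at h
  exact h.of_norm

lemma ordinaryHypergeometric_monotoneOn {a b c : ℝ} (ha : 0 < a) (hb : 0 < b) (hc : 0 < c) :
    MonotoneOn (₂F₁ a b c : ℝ → ℝ) (Ico 0 1) := by
  intro t ht t' ht' htt'
  simp only [ordinaryHypergeometric_eq_tsum, smul_eq_mul]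
  refine Summable.tsum_le_tsum (fun k => ?_)
    (summable_ordinaryHypergeometricCoefficient_mul_pow ha hb hc
      (abs_lt.2 ⟨by linarith [ht.1], ht.2⟩))
    (summable_ordinaryHypergeometricCoefficient_mul_pow ha hb hc
      (abs_lt.2 ⟨by linarith [ht'.1], ht'.2⟩))
  exact mul_le_mul_of_nonneg_left (pow_le_pow_left₀ ht.1 htt' k)
    (ordinaryHypergeometricCoefficient_pos ha hb hc k).le

lemma hyp2F1_monotoneOn {a b c : ℝ} (ha : 0 ≤ a) (hb : 0 ≤ b) (hc : 0 ≤ c) :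
    MonotoneOn (hyp2F1 a b c) (Ico 0 1) := by
  by_cases h : a = 0 ∨ b = 0 ∨ c = 0
  · rw [hyp2F1_eq_zero_of_eq_zero h]
    exact monotoneOn_const
  · obtain ⟨ha', hb', hc'⟩ : 0 < a ∧ 0 < b ∧ 0 < c := by
      push Not at h
      exact ⟨ha.lt_of_ne' h.1, hb.lt_of_ne' h.2.1, hc.lt_of_ne' h.2.2⟩
    rw [hyp2F1_eq_ordinaryHypergeometric ha' hb' hc']
    exact ordinaryHypergeometric_monotoneOn ha' hb' hc'

lemma Spq_nonneg (n p q : ℕ) {t : ℝ} (ht : 0 ≤ t) : 0 ≤ Spq n p q t :=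
  mul_nonneg (by positivity) (hyp2F1_nonneg (by positivity) (by positivity) (by positivity) ht)

lemma Spq_monotoneOn (n p q : ℕ) : MonotoneOn (Spq n p q) (Ico 0 1) :=
  fun _ ht _ ht' htt' => mul_le_mul_of_nonneg_left
    (hyp2F1_monotoneOn (by positivity) (by positivity) (by positivity) ht ht' htt')
    (by positivity)

lemma norm_Spq_mul (n p q : ℕ) {t : ℝ} (ht : 0 ≤ t) (w : ℂ) :
    ‖(Spq n p q t : ℂ) * w‖ = Spq n p q t * ‖w‖ := by
  rw [norm_mul, Complex.norm_real, Real.norm_of_nonneg (Spq_nonneg n p q ht)]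

lemma MvPolynomial.IsHomogeneous.eval_smul {σ R : Type*} [CommSemiring R]
    {Q : MvPolynomial σ R} {m : ℕ} (hQ : Q.IsHomogeneous m) (c : R) (x : σ → R) :
    MvPolynomial.eval (c • x) Q = c ^ m * MvPolynomial.eval x Q := by
  rw [MvPolynomial.eval_eq, MvPolynomial.eval_eq, Finset.mul_sum]
  refine Finset.sum_congr rfl fun d hd => ?_
  have hdeg : ∑ i ∈ d.support, d i = m := by
    simpa [Finsupp.weight_apply, Finsupp.sum] using hQ (MvPolynomial.mem_support_iff.mp hd)
  simp only [Pi.smul_apply, smul_eq_mul, mul_pow, Finset.prod_mul_distrib,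
    Finset.prod_pow_eq_pow_sum, hdeg]
  ring

lemma InHtilde.exists_isHomogeneous {n p q : ℕ} {P : En n → ℂ} (hP : InHtilde n p q P) :
    ∃ Q : MvPolynomial (Fin n ⊕ Fin n) ℂ, Q.IsHomogeneous (p + q) ∧
      P = fun z => MvPolynomial.eval (Sum.elim (fun j => z j) (fun j => starRingEnd ℂ (z j))) Q := by
  obtain ⟨⟨Q, hQ, hdeg⟩, -⟩ := hP
  refine ⟨Q, fun d hd => ?_, funext hQ⟩
  obtain ⟨hp, hq⟩ := hdeg d (MvPolynomial.mem_support_iff.mpr hd)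
  simp [Finsupp.weight_apply, Finsupp.sum_fintype, Fintype.sum_sum_type, hp, hq]

lemma InHtilde.apply_smul {n p q : ℕ} {P : En n → ℂ} (hP : InHtilde n p q P) (c : ℝ)
    (z : En n) : P (c • z) = (c : ℂ) ^ (p + q) * P z := by
  obtain ⟨Q, hQ, rfl⟩ := hP.exists_isHomogeneous
  beta_reduce
  rw [← hQ.eval_smul]
  congr 1
  ext (j | j) <;> simp [Complex.real_smul]

lemma InHtilde.continuous {n p q : ℕ} {P : En n → ℂ} (hP : InHtilde n p q P) : Continuous P := by
  obtain ⟨Q, -, rfl⟩ := hP.exists_isHomogeneous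
  refine MvPolynomial.continuous_eval Q |>.comp (continuous_pi fun i => ?_)
  rcases i with j | j
  · exact (EuclideanSpace.proj j).continuous
  · exact Complex.continuous_conj.comp (EuclideanSpace.proj j).continuous

lemma InHtilde.apply_zero {n p q : ℕ} {P : En n → ℂ} (hP : InHtilde n p q P) (hpq : p + q ≠ 0) :
    P 0 = 0 := by
  simpa [zero_pow hpq] using hP.apply_smul 0 0

lemma InHtilde.exists_norm_Spq_mul_le {n p q : ℕ} {P : En n → ℂ} (hP : InHtilde n p q P)
    {R : ℝ} (hR : R < 1) :
    ∃ C, ∀ z ∈ Metric.closedBall (0 : En n) R, ‖(Spq n p q (‖z‖ ^ 2) : ℂ) * P z‖ ≤ C := by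
  obtain ⟨D, hD⟩ := (isCompact_closedBall (0 : En n) R).exists_bound_of_continuousOn
    hP.continuous.continuousOn
  refine ⟨Spq n p q (R ^ 2) * D, fun z hz => ?_⟩
  have hzR : ‖z‖ ≤ R := mem_closedBall_zero_iff.mp hz
  rw [norm_Spq_mul n p q (sq_nonneg _)]
  refine mul_le_mul (Spq_monotoneOn n p q ⟨sq_nonneg _, ?_⟩ ⟨sq_nonneg _, ?_⟩ ?_) (hD z hz)
    (norm_nonneg _) (Spq_nonneg n p q (sq_nonneg _))
  all_goals nlinarith [norm_nonneg z]

lemma InHtilde.norm_Spq_mul_le {n p q : ℕ} {P : En n → ℂ} (hP : InHtilde n p q P)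
    {R C : ℝ} (hR : R < 1)
    (hC : ∀ w ∈ Metric.closedBall (0 : En n) R, ‖(Spq n p q (‖w‖ ^ 2) : ℂ) * P w‖ ≤ C)
    {z : En n} (hz : ‖z‖ ≤ R) :
    ‖(Spq n p q (‖z‖ ^ 2) : ℂ) * P z‖ ≤ (‖z‖ / R) ^ (p + q) * C := by
  by_cases hpq : p + q = 0
  · simpa [hpq] using hC z (mem_closedBall_zero_iff.2 hz)
  rcases eq_or_ne z 0 with rfl | hz0
  · simp [hP.apply_zero hpq, zero_pow hpq]
  have hz0 : 0 < ‖z‖ := norm_pos_iff.mpr hz0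
  have hR0 : 0 < R := hz0.trans_le hz
  set c : ℝ := R / ‖z‖
  have hc : 0 < c := by positivity
  have hw : ‖c • z‖ = R := by
    rw [norm_smul, Real.norm_of_nonneg hc.le]
    exact div_mul_cancel₀ R hz0.ne'
  have hPw : ‖P (c • z)‖ = c ^ (p + q) * ‖P z‖ := by
    rw [hP.apply_smul, norm_mul, norm_pow, Complex.norm_real, Real.norm_of_nonneg hc.le]
  have hS : Spq n p q (‖z‖ ^ 2) ≤ Spq n p q (R ^ 2) :=
    Spq_monotoneOn n p q ⟨sq_nonneg _, by nlinarith⟩ ⟨sq_nonneg _, by nlinarith⟩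
      (by nlinarith)
  have hCw := hC (c • z) (mem_closedBall_zero_iff.2 hw.le)
  rw [norm_Spq_mul n p q (sq_nonneg _), hw, hPw] at hCw
  have hcz : (‖z‖ / R) ^ (p + q) * c ^ (p + q) = 1 := by
    rw [← mul_pow, show ‖z‖ / R * c = 1 by simp only [c]; field_simp, one_pow]
  rw [norm_Spq_mul n p q (sq_nonneg _)]
  calc Spq n p q (‖z‖ ^ 2) * ‖P z‖
      = (‖z‖ / R) ^ (p + q) * (Spq n p q (‖z‖ ^ 2) * (c ^ (p + q) * ‖P z‖)) := by
        linear_combination (Spq n p q (‖z‖ ^ 2) * ‖P z‖) * hcz.symm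
    _ ≤ (‖z‖ / R) ^ (p + q) * (Spq n p q (R ^ 2) * (c ^ (p + q) * ‖P z‖)) := by gcongr
    _ ≤ (‖z‖ / R) ^ (p + q) * C := by gcongr

lemma exists_forall_norm_le_of_tendstoUniformlyOn_finsetSum {ι α E : Type*}
    [NormedAddCommGroup E] {f : ι → α → E} {g : α → E} {s : Set α}
    (hf : TendstoUniformlyOn (fun (N : Finset ι) x => ∑ i ∈ N, f i x) g atTop s)
    (hbdd : ∀ i, ∃ C, ∀ x ∈ s, ‖f i x‖ ≤ C) :
    ∃ C, ∀ i, ∀ x ∈ s, ‖f i x‖ ≤ C := by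
  classical
  obtain ⟨N₀, hN₀⟩ := Metric.uniformCauchySeqOn_iff.mp hf.uniformCauchySeqOn 1 one_pos
  choose D hD using hbdd
  refine ⟨1 + ∑ i ∈ N₀, |D i|, fun i x hx => ?_⟩
  have hsum : 0 ≤ ∑ i ∈ N₀, |D i| := Finset.sum_nonneg fun i _ => abs_nonneg _
  by_cases hi : i ∈ N₀
  · have := Finset.single_le_sum (fun j _ => abs_nonneg (D j)) hi
    linarith [hD i x hx, le_abs_self (D i)]
  · have h := hN₀ (insert i N₀) (Finset.subset_insert i N₀) N₀ le_rfl x hx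
    rw [dist_eq_norm, Finset.sum_insert hi, add_sub_cancel_right] at h
    linarith

def multiplier (n p q : ℕ) : ℝ := 4 * (p : ℝ) * q + (2 * (n : ℝ) - 2) * ((p : ℝ) + q) + 1

lemma one_le_multiplier {n : ℕ} (hn : 1 ≤ n) (p q : ℕ) : 1 ≤ multiplier n p q := by
  have hn' : (1 : ℝ) ≤ n := by exact_mod_cast hn
  unfold multiplier
  nlinarith [p.cast_nonneg (α := ℝ), q.cast_nonneg (α := ℝ)]

lemma multiplier_le {n : ℕ} (hn : 1 ≤ n) (p q : ℕ) :
    multiplier n p q ≤ 4 * n * (((p : ℝ) + 1) * (q + 1)) := by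
  have hn' : (1 : ℝ) ≤ n := by exact_mod_cast hn
  unfold multiplier
  nlinarith [mul_nonneg (sub_nonneg.2 hn') (mul_nonneg p.cast_nonneg q.cast_nonneg),
    p.cast_nonneg (α := ℝ), q.cast_nonneg (α := ℝ)]

lemma norm_multiplier_cpow_le {n : ℕ} (hn : 1 ≤ n) (p q : ℕ) (t : ℂ) :
    ‖(multiplier n p q : ℂ) ^ t‖ ≤ (4 * n * (((p : ℝ) + 1) * (q + 1))) ^ ⌈t.re⌉₊ := by
  have h1 := one_le_multiplier hn p q
  rw [Complex.norm_cpow_eq_rpow_re_of_pos (by linarith)]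
  calc _ ≤ multiplier n p q ^ (⌈t.re⌉₊ : ℝ) := Real.rpow_le_rpow_of_exponent_le h1 (Nat.le_ceil _)
    _ = multiplier n p q ^ ⌈t.re⌉₊ := Real.rpow_natCast _ _
    _ ≤ _ := by gcongr; exact multiplier_le hn p q

lemma summable_succ_pow_mul_geometric {ρ : ℝ} (h0 : 0 < ρ) (h1 : ρ < 1) (m : ℕ) :
    Summable fun k : ℕ => ((k : ℝ) + 1) ^ m * ρ ^ k := by
  have h := (_root_.summable_nat_add_iff 1).mpr
    (summable_pow_mul_geometric_of_norm_lt_one (R := ℝ) m (by rwa [Real.norm_of_nonneg h0.le]))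
  refine (h.div_const ρ).congr fun k => ?_
  rw [pow_succ, Nat.cast_succ, mul_div_assoc, mul_div_cancel_right₀ _ h0.ne']

lemma summable_succ_mul_succ_pow_mul_geometric {ρ : ℝ} (h0 : 0 < ρ) (h1 : ρ < 1) (m : ℕ) :
    Summable fun pq : ℕ × ℕ => (((pq.1 : ℝ) + 1) * (pq.2 + 1)) ^ m * ρ ^ (pq.1 + pq.2) := by
  refine (Summable.mul_of_nonneg (summable_succ_pow_mul_geometric h0 h1 m)
    (summable_succ_pow_mul_geometric h0 h1 m) (fun _ => by positivity)
    (fun _ => by positivity)).congr fun pq => ?_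
  rw [mul_pow, pow_add]
  ring

lemma InHtilde.norm_multiplier_cpow_mul_le {n p q : ℕ} (hn : 1 ≤ n) {P : En n → ℂ}
    (hP : InHtilde n p q P) (t : ℂ) {r R C : ℝ} (hrR : r ≤ R) (hR : R < 1)
    (hC : ∀ w ∈ Metric.closedBall (0 : En n) R, ‖(Spq n p q (‖w‖ ^ 2) : ℂ) * P w‖ ≤ C)
    {z : En n} (hz : ‖z‖ ≤ r) :
    ‖(multiplier n p q : ℂ) ^ t * (Spq n p q (‖z‖ ^ 2) : ℂ) * P z‖ ≤
      (4 * n * (((p : ℝ) + 1) * (q + 1))) ^ ⌈t.re⌉₊ * ((r / R) ^ (p + q) * C) := by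
  have hR0 : 0 ≤ R := (norm_nonneg z).trans (hz.trans hrR)
  have hC0 : 0 ≤ C := (norm_nonneg _).trans (hC 0 (by simp [hR0]))
  rw [mul_assoc, norm_mul]
  gcongr
  · exact norm_multiplier_cpow_le hn p q t
  · exact (hP.norm_Spq_mul_le hR hC (hz.trans hrR)).trans (by gcongr)

/-- Proposition 2.1: if `Σ S_pq(|z|²) p̃_pq` converges uniformly on compact subsets of the
ball, then for every `t ∈ ℂ` the series `Σ [4pq+(2n-2)(p+q)+1]^t S_pq(|z|²) p̃_pq` converges
absolutely and uniformly on compact subsets of the ball. -/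
theorem statement9 (n : ℕ) (hn : 1 ≤ n) (P : ℕ × ℕ → En n → ℂ)
    (hP : ∀ pq : ℕ × ℕ, InHtilde n pq.1 pq.2 (P pq))
    (hconv : ∃ f : En n → ℂ, ∀ K : Set (En n), IsCompact K → K ⊆ Metric.ball 0 1 →
      TendstoUniformlyOn
        (fun (N : Finset (ℕ × ℕ)) z => ∑ pq ∈ N, (Spq n pq.1 pq.2 (‖z‖ ^ 2) : ℂ) * P pq z)
        f Filter.atTop K) :
    ∀ t : ℂ, ∀ K : Set (En n), IsCompact K → K ⊆ Metric.ball 0 1 →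
      (∃ g : En n → ℝ, TendstoUniformlyOn
        (fun (N : Finset (ℕ × ℕ)) z => ∑ pq ∈ N,
          ‖((4 * (pq.1 : ℝ) * pq.2 + (2 * (n : ℝ) - 2) * ((pq.1 : ℝ) + pq.2) + 1 : ℝ) : ℂ) ^ t *
            (Spq n pq.1 pq.2 (‖z‖ ^ 2) : ℂ) * P pq z‖)
        g Filter.atTop K) ∧
      (∃ h : En n → ℂ, TendstoUniformlyOn
        (fun (N : Finset (ℕ × ℕ)) z => ∑ pq ∈ N,
          ((4 * (pq.1 : ℝ) * pq.2 + (2 * (n : ℝ) - 2) * ((pq.1 : ℝ) + pq.2) + 1 : ℝ) : ℂ) ^ t *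
            (Spq n pq.1 pq.2 (‖z‖ ^ 2) : ℂ) * P pq z)
        h Filter.atTop K) := by
  obtain ⟨f, hf⟩ := hconv
  intro t K hK hKball
  obtain ⟨r, ⟨hr0, hr1⟩, hKr⟩ := exists_pos_lt_subset_ball one_pos hK.isClosed hKball
  obtain ⟨R, hrR, hR1⟩ := exists_between hr1
  have hR0 : 0 < R := hr0.trans hrR
  obtain ⟨C, hC⟩ := exists_forall_norm_le_of_tendstoUniformlyOn_finsetSum
    (hf _ (isCompact_closedBall 0 R) (Metric.closedBall_subset_ball hR1))
    fun pq => (hP pq).exists_norm_Spq_mul_le hR1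
  set m := ⌈t.re⌉₊
  have hu : Summable fun pq : ℕ × ℕ =>
      (4 * n * (((pq.1 : ℝ) + 1) * (pq.2 + 1))) ^ m * ((r / R) ^ (pq.1 + pq.2) * C) :=
    ((summable_succ_mul_succ_pow_mul_geometric (div_pos hr0 hR0) ((div_lt_one hR0).2 hrR)
      m).mul_left ((4 * n : ℝ) ^ m * C)).congr fun pq => by simp only [mul_pow]; ring
  have hbound (pq : ℕ × ℕ) (z : En n) (hz : z ∈ K) :=
    (hP pq).norm_multiplier_cpow_mul_le hn t hrR.le hR1 (hC pq) (mem_ball_zero_iff.mp (hKr hz)).le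
  exact ⟨⟨_, tendstoUniformlyOn_tsum hu fun pq z hz => (norm_norm _).trans_le (hbound pq z hz)⟩,
    ⟨_, tendstoUniformlyOn_tsum hu hbound⟩⟩
end

section
/- Let n ≥ 1 and let p, q ≥ 1 be integers. Then lim_{r→1⁻} (1-r) · (r d/dr)^{n+1} [ r^{p+q} ₂F₁(p,q;p+q+n;r²) ] = 2^n Γ(p+q+n) / (Γ(p)Γ(q)), where (r d/dr)^{n+1} denotes the (n+1)-fold iterate of the operator u(r) ↦ r u′(r) applied to the function r ↦ r^{p+q} ₂F₁(p,q;p+q+n;r²) on (0,1). -/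
open MeasureTheory ENNReal NNReal

/-- The operator `u(r) ↦ r u'(r)`. -/
noncomputable def opN (g : ℝ → ℝ) : ℝ → ℝ := fun r => r * deriv g r

open Filter Topology Finset

/-!
Write `F(r) = r^(p+q) ₂F₁(p,q;c;r²) = ∑ A_k r^(p+q+2k)` with `c = p+q+n`. The Euler operator
`r d/dr` multiplies the monomial `r^m` by `m`, so `(r d/dr)^(n+1) F = ∑ A_k (p+q+2k)^(n+1) r^(p+q+2k)`
for `|r| < 1`. Euler's limit formula for `Γ` gives `(a)_k ~ k! k^(a-1) / Γ(a)`, hence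
`A_k (p+q+2k)^(n+1) → 2^(n+1) Γ(c) / (Γ(p) Γ(q))`. Finally, if `b_k → L` then Abel's theorem
gives `(1-x) ∑ b_k x^k → L` as `x → 1⁻`; with `x = r²` and `1 - r = (1 - r²)/(1 + r)` the
limit of `(1 - r) ∑ b_k r^(p+q+2k)` is `L / 2`.
-/

lemma poch_succ {a : ℝ} (ha : 0 < a) (k : ℕ) : poch a (k + 1) = poch a k * (a + k) := by
  have : a + k ≠ 0 := by positivity
  simp only [poch, Nat.cast_succ, ← add_assoc, Real.Gamma_add_one this]
  ring

lemma poch_pos {a : ℝ} (ha : 0 < a) (k : ℕ) : 0 < poch a k :=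
  div_pos (Real.Gamma_pos_of_pos (by positivity)) (Real.Gamma_pos_of_pos ha)

lemma prod_range_add_eq_poch {a : ℝ} (ha : 0 < a) (k : ℕ) :
    ∏ j ∈ range k, (a + j) = poch a k := by
  induction k with
  | zero => simp [poch, (Real.Gamma_pos_of_pos ha).ne']
  | succ k ih => rw [prod_range_succ, ih, poch_succ ha]

lemma tendsto_poch_div_factorial_mul_rpow {a : ℝ} (ha : 0 < a) :
    Tendsto (fun k : ℕ => poch a k / (k.factorial * (k : ℝ) ^ (a - 1))) atTop
      (𝓝 (Real.Gamma a)⁻¹) := by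
  have hseq : Tendsto (fun k : ℕ => (k / (k + a)) * (Real.GammaSeq a k)⁻¹) atTop
      (𝓝 (1 * (Real.Gamma a)⁻¹)) :=
    (tendsto_natCast_div_add_atTop a).mul
      ((Real.GammaSeq_tendsto_Gamma a).inv₀ (Real.Gamma_pos_of_pos ha).ne')
  rw [one_mul] at hseq
  refine hseq.congr' ?_
  filter_upwards [eventually_gt_atTop 0] with k hk
  have hk' : (0 : ℝ) < k := by exact_mod_cast hk
  have hpow : (k : ℝ) ^ a = (k : ℝ) ^ (a - 1) * k := by
    rw [← Real.rpow_add_one hk'.ne', sub_add_cancel]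
  rw [Real.GammaSeq, prod_range_add_eq_poch ha, poch_succ ha, hpow]
  have := poch_pos ha k
  have := Real.rpow_pos_of_pos hk' (a - 1)
  have := k.factorial_pos
  field_simp
  ring

noncomputable def hyp2F1Coeff (a b c : ℝ) (k : ℕ) : ℝ :=
  poch a k * poch b k / (poch c k * k.factorial)

lemma tendsto_hyp2F1Coeff_mul_pow {a b : ℝ} (ha : 0 < a) (hb : 0 < b) (n : ℕ) :
    Tendsto (fun k : ℕ => hyp2F1Coeff a b (a + b + n) k * (a + b + 2 * k) ^ (n + 1)) atTop
      (𝓝 (2 ^ (n + 1) * Real.Gamma (a + b + n) / (Real.Gamma a * Real.Gamma b))) := by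
  set c := a + b + n
  have hc : 0 < c := by positivity
  have hratio : Tendsto (fun k : ℕ => (a + b + 2 * k) / k) atTop (𝓝 2) := by
    have := (tendsto_const_div_atTop_nhds_zero_nat (a + b)).add_const (2 : ℝ)
    rw [zero_add] at this
    refine this.congr' ?_
    filter_upwards [eventually_gt_atTop 0] with k hk
    field_simp
  have hlim := (((tendsto_poch_div_factorial_mul_rpow ha).mul
    (tendsto_poch_div_factorial_mul_rpow hb)).div (tendsto_poch_div_factorial_mul_rpow hc)
    (inv_ne_zero (Real.Gamma_pos_of_pos hc).ne')).mul (hratio.pow (n + 1))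
  rw [show 2 ^ (n + 1) * Real.Gamma c / (Real.Gamma a * Real.Gamma b)
      = (Real.Gamma a)⁻¹ * (Real.Gamma b)⁻¹ / (Real.Gamma c)⁻¹ * 2 ^ (n + 1) by
    field_simp]
  refine hlim.congr' ?_
  filter_upwards [eventually_gt_atTop 0] with k hk
  have hk' : (0 : ℝ) < k := by exact_mod_cast hk
  have hsplit : (k : ℝ) ^ (c - 1) = (k : ℝ) ^ (a - 1) * (k : ℝ) ^ (b - 1) * (k : ℝ) ^ (n + 1) := by
    rw [← Real.rpow_add hk', ← Real.rpow_natCast, ← Real.rpow_add hk']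
    congr 1
    push_cast
    ring
  have := poch_pos ha k
  have := poch_pos hb k
  have := poch_pos hc k
  have := Real.rpow_pos_of_pos hk' (a - 1)
  have := Real.rpow_pos_of_pos hk' (b - 1)
  have := k.factorial_pos
  simp only [Pi.div_apply, hyp2F1Coeff, hsplit]
  field_simp
  rw [← mul_pow, mul_div_cancel₀ _ hk'.ne']

lemma pow_mul_hyp2F1_sq_eq_tsum (m : ℕ) (a b c x : ℝ) :
    x ^ m * hyp2F1 a b c (x ^ 2) = ∑' k, hyp2F1Coeff a b c k * x ^ (m + 2 * k) := by
  change x ^ m * ∑' k, hyp2F1Coeff a b c k * (x ^ 2) ^ k = _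
  rw [← _root_.tsum_mul_left]
  exact tsum_congr fun k => by rw [pow_add, pow_mul]; ring

lemma tendsto_one_sub_mul_tsum_powerSeries_nhdsWithin_lt {b : ℕ → ℝ} {l : ℝ}
    (h : Tendsto b atTop (𝓝 l)) :
    Tendsto (fun x => (1 - x) * ∑' k, b k * x ^ k) (𝓝[<] 1) (𝓝 l) := by
  -- Abel's theorem applied to the differences `b k - b (k - 1)`, whose partial sums are `b`.
  set f : ℕ → ℝ := fun k => b k - if k = 0 then 0 else b (k - 1) with hf
  have hpartial : ∀ N, ∑ i ∈ range (N + 1), f i = b N := by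
    intro N
    induction N with
    | zero => simp [hf]
    | succ N ih => rw [sum_range_succ, ih, hf]; simp
  have habel : Tendsto (fun x => ∑' k, f k * x ^ k) (𝓝[<] 1) (𝓝 l) := by
    refine Real.tendsto_tsum_powerSeries_nhdsWithin_lt ((tendsto_add_atTop_iff_nat 1).mp ?_)
    simpa only [hpartial] using h
  refine habel.congr' ?_
  filter_upwards [Ioo_mem_nhdsLT (show (-1 : ℝ) < 1 by norm_num)] with x hx
  have hx' : ‖x‖ < 1 := abs_lt.mpr hx
  obtain ⟨M, hM⟩ := h.norm.bddAbove_range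
  have hb : HasSum (fun k => b k * x ^ k) (∑' k, b k * x ^ k) := by
    refine (Summable.of_norm_bounded
      ((summable_geometric_of_lt_one (norm_nonneg x) hx').mul_left M) fun k => ?_).hasSum
    rw [norm_mul, norm_pow]
    exact mul_le_mul_of_nonneg_right (hM ⟨k, rfl⟩) (by positivity)
  have hshift := (hasSum_nat_add_iff' 1).mpr hb
  refine ((hasSum_nat_add_iff' (f := fun k => f k * x ^ k) 1).mp ?_).tsum_eq
  convert hshift.sub (hb.mul_left x) using 1
  · ext k
    simp only [hf, Nat.add_eq_zero_iff, one_ne_zero, and_false, ↓reduceIte,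
      add_tsub_cancel_right, pow_succ]
    ring
  · simp only [range_one, hf, sum_singleton, ↓reduceIte, sub_zero, pow_zero, mul_one]
    ring

lemma tendsto_sq_nhdsWithin_lt_one : Tendsto (fun r : ℝ => r ^ 2) (𝓝[<] 1) (𝓝[<] 1) := by
  refine tendsto_nhdsWithin_iff.mpr ⟨?_, ?_⟩
  · exact ((continuous_pow 2).tendsto' 1 1 (one_pow 2)).mono_left nhdsWithin_le_nhds
  · filter_upwards [Ioo_mem_nhdsLT (show (-1 : ℝ) < 1 by norm_num)] with r hr
    exact (sq_lt_one_iff_abs_lt_one r).mpr (abs_lt.mpr hr)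

lemma tendsto_one_sub_mul_tsum_pow_add_two_mul {b : ℕ → ℝ} {l : ℝ} (m : ℕ)
    (h : Tendsto b atTop (𝓝 l)) :
    Tendsto (fun r => (1 - r) * ∑' k, b k * r ^ (m + 2 * k)) (𝓝[<] 1) (𝓝 (l / 2)) := by
  have habel := (tendsto_one_sub_mul_tsum_powerSeries_nhdsWithin_lt h).comp
    tendsto_sq_nhdsWithin_lt_one
  have hfactor : Tendsto (fun r : ℝ => r ^ m / (1 + r)) (𝓝[<] 1) (𝓝 (1 / 2)) := by
    have := ((continuous_pow m).tendsto (1 : ℝ)).div (tendsto_const_nhds.add tendsto_id)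
      (by norm_num : (1 : ℝ) + 1 ≠ 0)
    rw [one_pow, one_add_one_eq_two] at this
    exact this.mono_left nhdsWithin_le_nhds
  rw [div_eq_inv_mul, ← one_div]
  refine (hfactor.mul habel).congr' ?_
  filter_upwards [Ioo_mem_nhdsLT (show (-1 : ℝ) < 1 by norm_num)] with r hr
  have h1r : 1 + r ≠ 0 := by linarith [hr.1]
  rw [Function.comp_apply, ← _root_.tsum_mul_left, ← _root_.tsum_mul_left,
    ← _root_.tsum_mul_left]
  refine tsum_congr fun k => ?_
  rw [pow_add, pow_mul]
  field_simp
  ring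

lemma exists_abs_le_of_tendsto_mul_pow {a x : ℕ → ℝ} {m : ℕ} {l : ℝ}
    (h : Tendsto (fun k => a k * x k ^ m) atTop (𝓝 l)) (hx : ∀ k, 1 ≤ x k) :
    ∃ M, ∀ k, |a k| ≤ M := by
  obtain ⟨M, hM⟩ := h.norm.bddAbove_range
  refine ⟨M, fun k => ?_⟩
  calc |a k| ≤ |a k| * |x k| ^ m :=
        le_mul_of_one_le_right (abs_nonneg _) (one_le_pow₀ ((hx k).trans (le_abs_self _)))
    _ = ‖a k * x k ^ m‖ := by rw [norm_mul, norm_pow, Real.norm_eq_abs, Real.norm_eq_abs]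
    _ ≤ M := hM ⟨k, rfl⟩

section EulerOperator

variable {a : ℕ → ℝ} {e : ℕ → ℕ} {C : ℝ} {d : ℕ}

lemma summable_mul_pow (he : e.Injective) (ha : ∀ k, |a k| ≤ C * e k ^ d) {r : ℝ}
    (hr : |r| < 1) : Summable fun k => a k * r ^ e k := by
  refine Summable.of_norm_bounded (((summable_pow_mul_geometric_of_norm_lt_one d
    (r := |r|) (by rwa [Real.norm_of_nonneg (abs_nonneg r)])).comp_injective he).mul_left C)
    fun k => ?_
  rw [Real.norm_eq_abs, abs_mul, abs_pow, Function.comp_apply, ← mul_assoc]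
  exact mul_le_mul_of_nonneg_right (ha k) (by positivity)

lemma hasDerivAt_tsum_mul_pow (he : e.Injective) (ha : ∀ k, |a k| ≤ C * e k ^ d) {r : ℝ}
    (hr : |r| < 1) :
    HasDerivAt (fun x => ∑' k, a k * x ^ e k) (∑' k, a k * (e k * r ^ (e k - 1))) r := by
  obtain ⟨ρ, hrρ, hρ1⟩ := exists_between hr
  have hρ0 : 0 < ρ := (abs_nonneg r).trans_lt hrρ
  have hu : Summable fun k => C / ρ * ((e k : ℝ) ^ (d + 1) * ρ ^ e k) := by
    have := (summable_pow_mul_geometric_of_norm_lt_one (R := ℝ) (d + 1) (r := ρ)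
      (by rwa [Real.norm_of_nonneg hρ0.le])).comp_injective he
    exact this.mul_left (C / ρ)
  have hbound : ∀ k, ∀ y ∈ Set.Ioo (-ρ) ρ,
      ‖a k * (e k * y ^ (e k - 1))‖ ≤ C / ρ * ((e k : ℝ) ^ (d + 1) * ρ ^ e k) := by
    intro k y hy
    have hy : |y| ≤ ρ := abs_le.mpr ⟨hy.1.le, hy.2.le⟩
    have hpow : ρ ^ (e k - 1) ≤ ρ ^ e k / ρ := by
      rw [le_div_iff₀ hρ0, ← pow_succ]
      exact pow_le_pow_of_le_one hρ0.le hρ1.le (by omega)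
    calc ‖a k * (e k * y ^ (e k - 1))‖ = |a k| * e k * |y| ^ (e k - 1) := by
          rw [Real.norm_eq_abs, abs_mul, abs_mul, abs_pow, Nat.abs_cast, mul_assoc]
      _ ≤ C * e k ^ d * e k * (ρ ^ e k / ρ) := by
          have hC : 0 ≤ C * e k ^ d := (abs_nonneg _).trans (ha k)
          gcongr
          · exact ha k
          · exact (pow_le_pow_left₀ (abs_nonneg y) hy _).trans hpow
      _ = C / ρ * ((e k : ℝ) ^ (d + 1) * ρ ^ e k) := by ring
  exact hasDerivAt_tsum_of_isPreconnected (g := fun k x => a k * x ^ e k)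
    (g' := fun k x => a k * (e k * x ^ (e k - 1))) hu isOpen_Ioo isPreconnected_Ioo
    (fun k y _ => (hasDerivAt_pow (e k) y).const_mul (a k)) hbound
    (y₀ := 0) ⟨neg_lt_zero.mpr hρ0, hρ0⟩
    (summable_mul_pow he ha (by simp)) (abs_lt.mp hrρ)

lemma opN_tsum_mul_pow (he : e.Injective) (ha : ∀ k, |a k| ≤ C * e k ^ d) {r : ℝ}
    (hr : |r| < 1) : opN (fun x => ∑' k, a k * x ^ e k) r = ∑' k, a k * e k * r ^ e k := by
  rw [opN, (hasDerivAt_tsum_mul_pow he ha hr).deriv, ← _root_.tsum_mul_left]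
  refine tsum_congr fun k => ?_
  rcases Nat.eq_zero_or_pos (e k) with h0 | hpos
  · simp [h0]
  · rw [← Nat.sub_add_cancel hpos, Nat.add_sub_cancel, pow_succ]
    push_cast
    ring

lemma iterate_opN_tsum_mul_pow (he : e.Injective) (ha : ∀ k, |a k| ≤ C * e k ^ d) (j : ℕ)
    {r : ℝ} (hr : |r| < 1) :
    opN^[j] (fun x => ∑' k, a k * x ^ e k) r = ∑' k, a k * e k ^ j * r ^ e k := by
  induction j generalizing r with
  | zero => simp
  | succ j ih =>
    have hnear : opN^[j] (fun x => ∑' k, a k * x ^ e k) =ᶠ[𝓝 r]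
        fun x => ∑' k, a k * e k ^ j * x ^ e k := by
      filter_upwards [(isOpen_lt continuous_abs continuous_const).mem_nhds hr] with x hx
      exact ih hx
    have ha' : ∀ k, |a k * e k ^ j| ≤ C * e k ^ (d + j) := fun k => by
      rw [abs_mul, abs_pow, Nat.abs_cast, pow_add, ← mul_assoc]
      exact mul_le_mul_of_nonneg_right (ha k) (by positivity)
    rw [Function.iterate_succ_apply', opN, hnear.deriv_eq, ← opN,
      opN_tsum_mul_pow he ha' hr]
    simp only [pow_succ, mul_assoc]

end EulerOperator

theorem statement19_general (n p q : ℕ) (hp : 1 ≤ p) (hq : 1 ≤ q) :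
    Filter.Tendsto
      (fun r : ℝ => (1 - r) *
        opN^[n + 1] (fun r => r ^ (p + q) * hyp2F1 p q ((p : ℝ) + q + n) (r ^ 2)) r)
      (nhdsWithin 1 (Set.Iio 1))
      (nhds (2 ^ n * Real.Gamma ((p : ℝ) + q + n) / (Real.Gamma p * Real.Gamma q))) := by
  set A := hyp2F1Coeff p q ((p : ℝ) + q + n)
  have he : (fun k => p + q + 2 * k).Injective := fun k l h => by simp only at h; omega
  have hlim : Tendsto (fun k => A k * ((p + q + 2 * k : ℕ) : ℝ) ^ (n + 1)) atTop
      (𝓝 (2 ^ (n + 1) * Real.Gamma ((p : ℝ) + q + n) / (Real.Gamma p * Real.Gamma q))) := by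
    simpa using tendsto_hyp2F1Coeff_mul_pow (a := p) (b := q) (by positivity) (by positivity) n
  obtain ⟨M, hM⟩ := exists_abs_le_of_tendsto_mul_pow hlim fun k => by norm_cast; omega
  simp_rw [pow_mul_hyp2F1_sq_eq_tsum]
  refine Tendsto.congr' ?_ (by
    convert tendsto_one_sub_mul_tsum_pow_add_two_mul (p + q) hlim using 2
    ring)
  filter_upwards [Ioo_mem_nhdsLT (show (-1 : ℝ) < 1 by norm_num)] with r hr
  rw [iterate_opN_tsum_mul_pow he (C := M) (d := 0) (by simpa using hM) (n + 1) (abs_lt.mpr hr)]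

/-- `(1-r)·(r d/dr)^{n+1}[r^{p+q} ₂F₁(p,q;p+q+n;r²)] → 2ⁿ Γ(p+q+n)/(Γ(p)Γ(q))` as `r → 1⁻`. -/
theorem statement19 (n p q : ℕ) (hn : 1 ≤ n) (hp : 1 ≤ p) (hq : 1 ≤ q) :
    Filter.Tendsto
      (fun r : ℝ => (1 - r) *
        opN^[n + 1] (fun r => r ^ (p + q) * hyp2F1 p q ((p : ℝ) + q + n) (r ^ 2)) r)
      (nhdsWithin 1 (Set.Iio 1))
      (nhds (2 ^ n * Real.Gamma ((p : ℝ) + q + n) / (Real.Gamma p * Real.Gamma q))) :=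
  statement19_general n p q hp hq
end
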